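/- There exist constants C > 0 and H > 0 such that for every θ ∈ ℝ and every m ∈ ℕ, the number of zeros of φ_θ in the rectangle {z ∈ ℂ : |Re z| ≤ 3^m, |Im z| ≤ H} is at most C · 3^m. -/

import Mathlib

noncomputable def c₁ (θ : ℝ) : ℝ := Real.cos (θ - Real.pi / 2)
noncomputable def c₂ (θ : ℝ) : ℝ := Real.cos (θ - 7 * Real.pi / 6)
noncomputable def c₃ (θ : ℝ) : ℝ := Real.cos (θ + Real.pi / 6)

/-- The entire function `φ_θ(z) = e^{−ic₁z} + e^{−ic₂z} + e^{−ic₃z}`. -/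
noncomputable def phiE (θ : ℝ) (z : ℂ) : ℂ :=
  Complex.exp (-Complex.I * (c₁ θ : ℂ) * z) +
    Complex.exp (-Complex.I * (c₂ θ : ℂ) * z) +
    Complex.exp (-Complex.I * (c₃ θ : ℂ) * z)

section Helpers

open Complex Metric

lemma count_key (R : ℝ) (hR : 0 < R) :
    ∀ (n : ℕ) (f : ℂ → ℂ) (δ M : ℝ) (z₀ : ℂ), 0 < δ → Differentiable ℂ f →
      δ ≤ ‖f z₀‖ → (∀ z, dist z z₀ ≤ 4*R → ‖f z‖ ≤ M) →
      ∀ S : Finset ℂ, S.card = n → (∀ a ∈ S, f a = 0 ∧ dist a z₀ ≤ R) →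
      δ * 3 ^ n ≤ M := by
  intro n
  induction n with
  | zero =>
    intro f δ M z₀ hδ hf hlow hM S hcard hS
    simpa using (hlow.trans (hM z₀ (by simp; positivity)))
  | succ n ih =>
    intro f δ M z₀ hδ hf hlow hM S hcard hS
    have hSne : S.Nonempty := Finset.card_pos.mp (by omega)
    obtain ⟨a, ha⟩ := hSne
    obtain ⟨hfa, haR⟩ := hS a ha
    set g : ℂ → ℂ := dslope f a with hg
    have hfactor : ∀ z, f z = (z - a) * g z := by
      intro z
      have := sub_smul_dslope f a z
      rw [hfa, sub_zero] at this
      simpa [smul_eq_mul] using this.symm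
    have hgdiff : Differentiable ℂ g := by
      rw [← differentiableOn_univ] at hf ⊢
      exact (differentiableOn_dslope (by simp)).mpr hf
    -- lower bound for g at z₀
    have haz₀ : a ≠ z₀ := by
      intro h; rw [← h] at hlow; rw [hfa] at hlow; simp at hlow; linarith
    have hz₀a : ‖(z₀ - a)‖ ≤ R := by
      rw [← dist_eq_norm, dist_comm]; exact haR
    have hglow : δ / R ≤ ‖g z₀‖ := by
      rw [div_le_iff₀ hR]
      have h1 : ‖f z₀‖ = ‖z₀ - a‖ * ‖g z₀‖ := by rw [hfactor z₀, norm_mul]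
      nlinarith [norm_nonneg (g z₀), hlow, norm_nonneg (z₀ - a)]
    -- upper bound for g on the big ball, via max modulus
    have hMpos : 0 < M := lt_of_lt_of_le hδ (hlow.trans (hM z₀ (by simp; positivity)))
    have hgM : ∀ z, dist z z₀ ≤ 4*R → ‖g z‖ ≤ M / (3*R) := by
      intro z hz
      have h4R : (0:ℝ) < 4*R := by linarith
      have hcl : z ∈ closure (ball z₀ (4*R)) := by
        rw [closure_ball z₀ (ne_of_gt h4R)]; exact mem_closedBall.mpr hz
      refine Complex.norm_le_of_forall_mem_frontier_norm_le isBounded_ball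
        hgdiff.diffContOnCl ?_ hcl
      intro w hw
      rw [frontier_ball z₀ (ne_of_gt h4R)] at hw
      have hwz : dist w z₀ = 4*R := mem_sphere.mp hw
      have hwa : 3*R ≤ ‖w - a‖ := by
        have := dist_triangle w a z₀
        rw [← dist_eq_norm]
        have : dist w z₀ ≤ dist w a + dist a z₀ := dist_triangle w a z₀
        linarith
      have hfw : ‖f w‖ ≤ M := hM w (le_of_eq hwz)
      have h1 : ‖f w‖ = ‖w - a‖ * ‖g w‖ := by rw [hfactor w, norm_mul]
      rw [le_div_iff₀ (by linarith)]
      nlinarith [norm_nonneg (g w)]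
    have hstep := ih g (δ / R) (M / (3*R)) z₀ (by positivity) hgdiff hglow hgM
      (S.erase a) (by rw [Finset.card_erase_of_mem ha, hcard]; rfl)
      (by
        intro b hb
        obtain ⟨hba, hbS⟩ := Finset.mem_erase.mp hb
        obtain ⟨hfb, hbR⟩ := hS b hbS
        refine ⟨?_, hbR⟩
        have := hfactor b
        rw [hfb] at this
        rcases mul_eq_zero.mp this.symm with h | h
        · exact absurd (sub_eq_zero.mp h) hba
        · exact h)
    rw [div_mul_eq_mul_div, div_le_div_iff₀ hR (by linarith)] at hstep
    calc δ * 3 ^ (n+1) = δ * 3 ^ n * 3 := by ring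
    _ ≤ M := by nlinarith

end Helpers

section Trig

open Real

lemma c1_eq (θ : ℝ) : c₁ θ = sin θ := by
  rw [c₁, Real.cos_sub]; simp

lemma c3_eq (θ : ℝ) : c₃ θ = (Real.sqrt 3 / 2) * cos θ - (1/2) * sin θ := by
  rw [c₃, Real.cos_add, Real.cos_pi_div_six, Real.sin_pi_div_six]; ring

lemma c2_eq (θ : ℝ) : c₂ θ = -(Real.sqrt 3 / 2) * cos θ - (1/2) * sin θ := by
  have h7 : 7 * Real.pi / 6 = Real.pi + Real.pi/6 := by ring
  rw [c₂, Real.cos_sub, h7, Real.cos_add, Real.sin_add, Real.cos_pi, Real.sin_pi,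
    Real.cos_pi_div_six, Real.sin_pi_div_six]
  ring

lemma abs_cj_le (θ : ℝ) : |c₁ θ| ≤ 1 ∧ |c₂ θ| ≤ 1 ∧ |c₃ θ| ≤ 1 :=
  ⟨Real.abs_cos_le_one _, Real.abs_cos_le_one _, Real.abs_cos_le_one _⟩

-- the squared modulus on the real line
lemma normSq_phi (θ x : ℝ) :
    Complex.normSq (phiE θ x) =
      3 + 2 * (Real.cos ((c₁ θ - c₂ θ) * x) + Real.cos ((c₂ θ - c₃ θ) * x)
        + Real.cos ((c₃ θ - c₁ θ) * x)) := by
  have key : ∀ c : ℝ, Complex.exp (-Complex.I * (c:ℂ) * (x:ℂ))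
      = ((Real.cos (c*x) : ℝ) : ℂ) + ((-Real.sin (c*x) : ℝ) : ℂ) * Complex.I := by
    intro c
    have : -Complex.I * (c:ℂ) * (x:ℂ) = ((-(c*x) : ℝ) : ℂ) * Complex.I := by
      push_cast; ring
    rw [this, Complex.exp_mul_I]
    rw [show (((-(c*x) : ℝ)) : ℂ) = -((c*x : ℝ) : ℂ) by push_cast; ring]
    rw [Complex.cos_neg, Complex.sin_neg, ← Complex.ofReal_cos, ← Complex.ofReal_sin]
    push_cast; ring
  rw [phiE, key, key, key]
  have hA : (((Real.cos (c₁ θ*x) : ℝ) : ℂ) + ((-Real.sin (c₁ θ*x) : ℝ) : ℂ) * Complex.I)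
      + (((Real.cos (c₂ θ*x) : ℝ) : ℂ) + ((-Real.sin (c₂ θ*x) : ℝ) : ℂ) * Complex.I)
      + (((Real.cos (c₃ θ*x) : ℝ) : ℂ) + ((-Real.sin (c₃ θ*x) : ℝ) : ℂ) * Complex.I)
      = ((Real.cos (c₁ θ*x) + Real.cos (c₂ θ*x) + Real.cos (c₃ θ*x) : ℝ) : ℂ)
        + ((-(Real.sin (c₁ θ*x) + Real.sin (c₂ θ*x) + Real.sin (c₃ θ*x)) : ℝ) : ℂ) * Complex.I := by
    push_cast; ring
  rw [hA, Complex.normSq_add_mul_I]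
  have e1 : (c₁ θ - c₂ θ) * x = c₁ θ * x - c₂ θ * x := by ring
  have e2 : (c₂ θ - c₃ θ) * x = c₂ θ * x - c₃ θ * x := by ring
  have e3 : (c₃ θ - c₁ θ) * x = c₃ θ * x - c₁ θ * x := by ring
  rw [e1, e2, e3, Real.cos_sub, Real.cos_sub, Real.cos_sub]
  have p1 := Real.sin_sq_add_cos_sq (c₁ θ * x)
  have p2 := Real.sin_sq_add_cos_sq (c₂ θ * x)
  have p3 := Real.sin_sq_add_cos_sq (c₃ θ * x)
  nlinarith [p1, p2, p3]

lemma exists_freqs (θ : ℝ) : ∃ p q : ℝ, 3/4 ≤ |p| ∧ 3/4 ≤ |q| ∧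
    ∀ x : ℝ, 1 + 2*Real.cos (p*x) + 2*Real.cos (q*x) ≤ Complex.normSq (phiE θ x) := by
  set d₁ := c₁ θ - c₂ θ with hd₁
  set d₂ := c₂ θ - c₃ θ with hd₂
  set d₃ := c₃ θ - c₁ θ with hd₃
  have hsq3 : Real.sqrt 3 ^ 2 = 3 := Real.sq_sqrt (by norm_num)
  have hpyth : sin θ ^ 2 + cos θ ^ 2 = 1 := Real.sin_sq_add_cos_sq θ
  have hsum : d₁ + d₂ + d₃ = 0 := by rw [hd₁, hd₂, hd₃]; ring
  have hsqsum : d₁^2 + d₂^2 + d₃^2 = 9/2 := by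
    rw [hd₁, hd₂, hd₃, c1_eq, c2_eq, c3_eq]; nlinarith [hsq3, hpyth]
  have habs : ∀ d : ℝ, 9/16 ≤ d^2 → 3/4 ≤ |d| := by
    intro d hd
    nlinarith [sq_abs d, abs_nonneg d]
  have hbound : ∀ x : ℝ, Complex.normSq (phiE θ x) =
      3 + 2 * (Real.cos (d₁ * x) + Real.cos (d₂ * x) + Real.cos (d₃ * x)) := normSq_phi θ
  have hcos : ∀ (y : ℝ), -1 ≤ Real.cos y := fun y => Real.neg_one_le_cos y
  rcases le_or_gt (9/16) (d₁^2) with h1 | h1 <;>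
    rcases le_or_gt (9/16) (d₂^2) with h2 | h2 <;>
    rcases le_or_gt (9/16) (d₃^2) with h3 | h3
  · exact ⟨d₁, d₂, habs _ h1, habs _ h2, fun x => by
      have := hcos (d₃ * x); rw [hbound x]; linarith⟩
  · exact ⟨d₁, d₂, habs _ h1, habs _ h2, fun x => by
      have := hcos (d₃ * x); rw [hbound x]; linarith⟩
  · exact ⟨d₁, d₃, habs _ h1, habs _ h3, fun x => by
      have := hcos (d₂ * x); rw [hbound x]; linarith⟩
  · exfalso; nlinarith [sq_nonneg (d₂ - d₃)]
  · exact ⟨d₂, d₃, habs _ h2, habs _ h3, fun x => by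
      have := hcos (d₁ * x); rw [hbound x]; linarith⟩
  · exfalso; nlinarith [sq_nonneg (d₁ - d₃)]
  · exfalso; nlinarith [sq_nonneg (d₁ - d₂)]
  · exfalso; nlinarith [sq_nonneg (d₁ - d₂)]

lemma exists_point (θ x₀ : ℝ) :
    ∃ x : ℝ, x₀ ≤ x ∧ x ≤ x₀ + 17 ∧ 1/2 ≤ ‖phiE θ x‖ := by
  obtain ⟨p, q, hp, hq, hfreq⟩ := exists_freqs θ
  have hp0 : p ≠ 0 := by intro h; rw [h] at hp; simp at hp; linarith
  have hq0 : q ≠ 0 := by intro h; rw [h] at hq; simp at hq; linarith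
  by_contra hcon
  push_neg at hcon
  have hsmall : ∀ x ∈ Set.Icc x₀ (x₀ + 17), Complex.normSq (phiE θ x) ≤ 1/3 := by
    intro x hx
    have h1 := hcon x hx.1 hx.2
    have h2 : ‖phiE θ x‖ ^ 2 = Complex.normSq (phiE θ x) := Complex.sq_norm _
    nlinarith [norm_nonneg (phiE θ x)]
  set F : ℝ → ℝ := fun x => -2*x/3 - 2*Real.sin (p*x)/p - 2*Real.sin (q*x)/q with hF
  have hder : ∀ x : ℝ, HasDerivAt F (-2/3 - 2*Real.cos (p*x) - 2*Real.cos (q*x)) x := by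
    intro x
    have hsp : HasDerivAt (fun y : ℝ => Real.sin (p*y)) (Real.cos (p*x) * p) x :=
      (Real.hasDerivAt_sin (p*x)).comp x (by simpa using (hasDerivAt_id x).const_mul p)
    have hsq' : HasDerivAt (fun y : ℝ => Real.sin (q*y)) (Real.cos (q*x) * q) x :=
      (Real.hasDerivAt_sin (q*x)).comp x (by simpa using (hasDerivAt_id x).const_mul q)
    have h1 : HasDerivAt (fun y : ℝ => -2*y/3) (-2/3) x := by
      have hfn : (fun y : ℝ => -2*y/3) = (fun y : ℝ => (-2/3 : ℝ)*y) := by funext y; ring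
      rw [hfn]
      simpa using (hasDerivAt_id x).const_mul (-2/3 : ℝ)
    have := (h1.sub ((hsp.const_mul 2).div_const p)).sub ((hsq'.const_mul 2).div_const q)
    have heq : (-2/3 - 2*Real.cos (p*x) - 2*Real.cos (q*x)) =
        (-2 / 3 - 2 * (Real.cos (p * x) * p) / p - 2 * (Real.cos (q * x) * q) / q) := by
      field_simp
    rw [heq]; exact this
  have hmono : MonotoneOn F (Set.Icc x₀ (x₀ + 17)) := by
    apply monotoneOn_of_deriv_nonneg (convex_Icc _ _)
    · exact (fun x _ => ((hder x).continuousAt.continuousWithinAt))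
    · intro x hx
      exact ((hder x).differentiableAt).differentiableWithinAt
    · intro x hx
      rw [interior_Icc] at hx
      rw [(hder x).deriv]
      have h1 := hfreq x
      have h2 := hsmall x ⟨le_of_lt hx.1, le_of_lt hx.2⟩
      linarith
  have hkey : F x₀ ≤ F (x₀ + 17) :=
    hmono ⟨le_refl _, by linarith⟩ ⟨by linarith, le_refl _⟩ (by linarith)
  have hbnd : ∀ (d : ℝ), d ≠ 0 → 3/4 ≤ |d| → ∀ A B : ℝ,
      2*Real.sin A/d - 2*Real.sin B/d ≤ 16/3 := by
    intro d hd0 hd A B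
    have h1 : 2*Real.sin A/d - 2*Real.sin B/d = 2*(Real.sin A - Real.sin B)/d := by ring
    rw [h1]
    have h2 : |2*(Real.sin A - Real.sin B)/d| ≤ 16/3 := by
      rw [abs_div, abs_mul]
      have hnum : |Real.sin A - Real.sin B| ≤ 2 := by
        have := Real.neg_one_le_sin A; have := Real.sin_le_one A
        have := Real.neg_one_le_sin B; have := Real.sin_le_one B
        rw [abs_le]; constructor <;> linarith
      have hden : (3:ℝ)/4 ≤ |d| := hd
      rw [div_le_iff₀ (by linarith : (0:ℝ) < |d|)]
      have : |(2:ℝ)| * |Real.sin A - Real.sin B| ≤ 4 := by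
        rw [abs_two]; linarith
      nlinarith
    linarith [(abs_le.mp h2).2, le_abs_self (2*(Real.sin A - Real.sin B)/d)]
  have hbp := hbnd p hp0 hp (p*x₀) (p*(x₀+17))
  have hbq := hbnd q hq0 hq (q*x₀) (q*(x₀+17))
  have hFx : F x₀ = -2*x₀/3 - 2*Real.sin (p*x₀)/p - 2*Real.sin (q*x₀)/q := rfl
  have hFy : F (x₀+17) = -2*(x₀+17)/3 - 2*Real.sin (p*(x₀+17))/p - 2*Real.sin (q*(x₀+17))/q := rfl
  rw [hFx, hFy] at hkey
  linarith

end Trig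

section Local
open Complex

lemma phi_diff (θ : ℝ) : Differentiable ℂ (phiE θ) := by
  unfold phiE
  exact (((differentiable_id.const_mul _).cexp).add
    ((differentiable_id.const_mul _).cexp)).add ((differentiable_id.const_mul _).cexp)

lemma exp_term_re (c : ℝ) (z : ℂ) : (-Complex.I * (c:ℂ) * z).re = c * z.im := by
  simp [Complex.mul_re, Complex.mul_im]

lemma phi_bound (θ : ℝ) (z : ℂ) : ‖phiE θ z‖ ≤ 3 * Real.exp |z.im| := by
  have hterm : ∀ c : ℝ, |c| ≤ 1 → ‖Complex.exp (-Complex.I * (c:ℂ) * z)‖ ≤ Real.exp |z.im| := by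
    intro c hc
    rw [Complex.norm_exp, exp_term_re]
    apply Real.exp_le_exp.mpr
    calc c * z.im ≤ |c * z.im| := le_abs_self _
    _ = |c| * |z.im| := abs_mul _ _
    _ ≤ 1 * |z.im| := mul_le_mul_of_nonneg_right hc (abs_nonneg _)
    _ = |z.im| := one_mul _
  have h1 := hterm (c₁ θ) (by rw [c₁]; exact Real.abs_cos_le_one _)
  have h2 := hterm (c₂ θ) (by rw [c₂]; exact Real.abs_cos_le_one _)
  have h3 := hterm (c₃ θ) (by rw [c₃]; exact Real.abs_cos_le_one _)
  calc ‖phiE θ z‖ ≤ ‖Complex.exp (-Complex.I * (c₁ θ:ℂ) * z) + Complex.exp (-Complex.I * (c₂ θ:ℂ) * z)‖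
      + ‖Complex.exp (-Complex.I * (c₃ θ:ℂ) * z)‖ := norm_add_le _ _
  _ ≤ ‖Complex.exp (-Complex.I * (c₁ θ:ℂ) * z)‖ + ‖Complex.exp (-Complex.I * (c₂ θ:ℂ) * z)‖
      + ‖Complex.exp (-Complex.I * (c₃ θ:ℂ) * z)‖ := by
        have := norm_add_le (Complex.exp (-Complex.I * (c₁ θ:ℂ) * z)) (Complex.exp (-Complex.I * (c₂ θ:ℂ) * z))
        linarith
  _ ≤ 3 * Real.exp |z.im| := by linarith

lemma local_count (θ x₀ : ℝ) (T : Finset ℂ)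
    (hT : ∀ z ∈ T, phiE θ z = 0 ∧ |z.re - x₀| ≤ 1 ∧ |z.im| ≤ 1) : T.card ≤ 78 := by
  obtain ⟨x₁, hx₁l, hx₁r, hx₁⟩ := exists_point θ x₀
  have hbig := count_key 19 (by norm_num) T.card (phiE θ) (1/2) (3 * Real.exp 76)
    ((x₁ : ℝ) : ℂ) (by norm_num) (phi_diff θ)
    (by exact hx₁)
    (by
      intro z hz
      have him : |z.im| ≤ 76 := by
        have h1 : |(z - (x₁:ℂ)).im| ≤ ‖z - (x₁:ℂ)‖ := Complex.abs_im_le_norm _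
        have h2 : (z - (x₁:ℂ)).im = z.im := by simp
        have h3 : ‖z - (x₁:ℂ)‖ = dist z (x₁:ℂ) := (Complex.dist_eq _ _).symm
        rw [h2, h3] at h1; linarith
      calc ‖phiE θ z‖ ≤ 3 * Real.exp |z.im| := phi_bound θ z
      _ ≤ 3 * Real.exp 76 := by
          have := Real.exp_le_exp.mpr him
          linarith)
    T rfl
    (by
      intro a ha
      obtain ⟨h0, hre, him⟩ := hT a ha
      refine ⟨h0, ?_⟩
      rw [Complex.dist_eq]
      calc ‖a - (x₁:ℂ)‖ ≤ |(a - (x₁:ℂ)).re| + |(a - (x₁:ℂ)).im| :=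
            Complex.norm_le_abs_re_add_abs_im _
      _ = |a.re - x₁| + |a.im| := by simp
      _ ≤ 18 + 1 := by
          have h18 : |a.re - x₁| ≤ 18 := by
            have h1 := abs_le.mp hre
            rw [abs_le]; constructor <;> [linarith [h1.1]; linarith [h1.2]]
          linarith
      _ = 19 := by norm_num)
  -- now 1/2 * 3^card ≤ 3 * exp 76 forces card ≤ 78
  by_contra hcon
  push_neg at hcon
  have h79 : (3:ℝ)^79 ≤ 3^(T.card) := by
    apply pow_le_pow_right₀ (by norm_num)
    omega
  have hexp : Real.exp 76 ≤ 3^76 := by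
    have h1 : Real.exp 76 = Real.exp 1 ^ 76 := by
      rw [← Real.exp_nat_mul]; norm_num
    rw [h1]
    apply pow_le_pow_left₀ (Real.exp_pos 1).le
    linarith [Real.exp_one_lt_d9]
  have hsplit : (3:ℝ)^79 = 9 * 3^77 := by
    rw [show (79:ℕ) = 2 + 77 by rfl, pow_add]; norm_num
  have h77 : (3:ℝ)^77 = 3 * 3^76 := by
    rw [show (77:ℕ) = 1 + 76 by rfl, pow_add]; norm_num
  nlinarith [pow_pos (by norm_num : (0:ℝ) < 3) 76]


end Local

/-- There are constants `C > 0`, `H > 0` such that for every `θ` and `m`, the number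
of zeros of `φ_θ` in the rectangle `|Re z| ≤ 3^m`, `|Im z| ≤ H` is at most `C·3^m`. -/
theorem zeros_count_in_rectangle :
    ∃ C > (0 : ℝ), ∃ H > (0 : ℝ), ∀ θ : ℝ, ∀ m : ℕ,
      (Set.ncard {z : ℂ | phiE θ z = 0 ∧ |z.re| ≤ 3 ^ m ∧ |z.im| ≤ H} : ℝ)
        ≤ C * 3 ^ m := by
  refine ⟨78, by norm_num, 1, by norm_num, fun θ m => ?_⟩
  set Z := {z : ℂ | phiE θ z = 0 ∧ |z.re| ≤ 3 ^ m ∧ |z.im| ≤ (1:ℝ)} with hZ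
  have h3m : 1 ≤ 3^m := Nat.one_le_pow _ _ (by norm_num)
  set idx : ℂ → ℕ := fun z => min ⌊(z.re + 3^m)/2⌋₊ (3^m - 1) with hidx
  -- every finset inside Z has card ≤ 78 * 3^m
  have claim : ∀ T : Finset ℂ, (↑T ⊆ Z) → T.card ≤ 78 * 3^m := by
    intro T hTZ
    have hmem : ∀ z ∈ T, idx z ∈ Finset.range (3^m) := by
      intro z _
      simp only [Finset.mem_range, hidx]
      omega
    rw [Finset.card_eq_sum_card_fiberwise hmem]
    have hfiber : ∀ k ∈ Finset.range (3^m),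
        (T.filter (fun z => idx z = k)).card ≤ 78 := by
      intro k _
      apply local_count θ (2*(k:ℝ) + 1 - 3^m)
      intro z hz
      rw [Finset.mem_filter] at hz
      obtain ⟨hzT, hzk⟩ := hz
      have hzZ := hTZ hzT
      obtain ⟨hz0, hzre, hzim⟩ := hzZ
      refine ⟨hz0, ?_, hzim⟩
      -- show |z.re - (2k+1-3^m)| ≤ 1
      set t := z.re + (3:ℝ)^m with ht
      have h0t : 0 ≤ t := by have := abs_le.mp hzre; rw [ht]; linarith [this.1]
      have h2t : t ≤ 2*3^m := by have := abs_le.mp hzre; rw [ht]; linarith [this.2]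
      have hrw : z.re - (2*(k:ℝ) + 1 - 3^m) = t - (2*(k:ℝ) + 1) := by rw [ht]; ring
      rw [hrw]
      -- k = idx z
      have hzk' : min ⌊t/2⌋₊ (3^m - 1) = k := by
        rw [ht, ← hzk, hidx]
      rcases le_or_gt ⌊t/2⌋₊ (3^m - 1) with hc | hc
      · have hk : k = ⌊t/2⌋₊ := by omega
        have hfl : (⌊t/2⌋₊ : ℝ) ≤ t/2 := Nat.floor_le (by positivity)
        have hfu : t/2 < ⌊t/2⌋₊ + 1 := Nat.lt_floor_add_one _
        rw [hk, abs_le]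
        constructor <;> linarith
      · -- then t = 2*3^m and k = 3^m - 1
        have hge : (((3^m : ℕ)) : ℝ) ≤ t/2 := by
          have h' : (3:ℕ)^m ≤ ⌊t/2⌋₊ := by omega
          exact_mod_cast (Nat.le_floor_iff (by positivity)).mp h'
        have hcast : (((3^m : ℕ)) : ℝ) = (3:ℝ)^m := by push_cast; ring
        have hteq : t = 2*3^m := by rw [hcast] at hge; linarith
        have hk : k = 3^m - 1 := by omega
        have hkcast : ((3^m - 1 : ℕ) : ℝ) = (3:ℝ)^m - 1 := by
          rw [Nat.cast_sub h3m]; push_cast; ring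
        rw [hk, hkcast, hteq, abs_le]
        constructor <;> linarith
    calc ∑ k ∈ Finset.range (3^m), (T.filter (fun z => idx z = k)).card
        ≤ ∑ k ∈ Finset.range (3^m), 78 := Finset.sum_le_sum hfiber
    _ = 78 * 3^m := by rw [Finset.sum_const, Finset.card_range]; ring
  -- Z is finite
  have hfin : Z.Finite := by
    by_contra hinf
    obtain ⟨T, hTZ, hTcard⟩ := Set.Infinite.exists_subset_card_eq hinf (78 * 3^m + 1)
    have := claim T hTZ
    omega
  have hcard : Z.ncard ≤ 78 * 3^m := by
    rw [Set.ncard_eq_toFinset_card Z hfin]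
    exact claim hfin.toFinset (by simp [Set.Finite.coe_toFinset])
  have : (Z.ncard : ℝ) ≤ (78 * 3^m : ℕ) := by exact_mod_cast hcard
  calc (Z.ncard : ℝ) ≤ ((78 * 3^m : ℕ) : ℝ) := this
  _ = 78 * 3^m := by push_cast; ring
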